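/- arXiv:1510.05386 — 5 statements merged into one kernel-verified Lean document; each statement's English description precedes it below -/
import Mathlib

section
/- Suppose θ < λ are regular cardinals with 2^θ < λ, and D is a θ-covering matrix for λ. Then D is locally downward coherent. -/
noncomputable section

universe u

open Cardinal Set

/-- The order type of a set of ordinals: the unique ordinal `o` such that `s` is
order-isomorphic to `Set.Iio o` (and `0` if there is no such ordinal). -/
def otp (s : Set Ordinal) : Ordinal :=
  sInf {o : Ordinal | Nonempty (s ≃o Set.Iio o)}

/-- `A` is unbounded in `β`. -/
def IsUnboundedIn (A : Set Ordinal) (β : Ordinal) : Prop :=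
  ∀ γ < β, ∃ δ ∈ A, γ ≤ δ

/-- `γ` is a limit of elements of `C`. -/
def IsAccPt (C : Set Ordinal) (γ : Ordinal) : Prop :=
  ∀ δ < γ, ∃ ε ∈ C, δ < ε ∧ ε < γ

/-- `C` is club in `β`: a subset of `β`, unbounded in `β`, and closed under limits below `β`. -/
def IsClubIn (C : Set Ordinal) (β : Ordinal) : Prop :=
  C ⊆ Set.Iio β ∧ IsUnboundedIn C β ∧ ∀ γ < β, 0 < γ → IsAccPt C γ → γ ∈ C

/-- `S` is stationary in `β`: it meets every club in `β`. -/
def IsStationaryIn (S : Set Ordinal) (β : Ordinal) : Prop :=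
  ∀ C, IsClubIn C β → (S ∩ C).Nonempty

/-- `D` is a `θ`-covering matrix for `lam`. -/
def IsCoveringMatrix (θ lam : Cardinal) (D : Ordinal → Ordinal → Set Ordinal) : Prop :=
  (∀ β < lam.ord, (⋃ i ∈ Set.Iio θ.ord, D i β) = Set.Iio β) ∧
  (∀ β < lam.ord, ∀ i j, i < j → j < θ.ord → D i β ⊆ D j β) ∧
  (∀ β γ, β < γ → γ < lam.ord → ∀ i < θ.ord, ∃ j < θ.ord, D i β ⊆ D j γ)

/-- `D` is transitive. -/
def TransitiveMatrix (θ lam : Cardinal) (D : Ordinal → Ordinal → Set Ordinal) : Prop :=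
  ∀ α β, α < β → β < lam.ord → ∀ i < θ.ord, α ∈ D i β → D i α ⊆ D i β

/-- `D` is uniform: every limit `β < lam` has some `D i β` containing a club in `β`. -/
def UniformMatrix (θ lam : Cardinal) (D : Ordinal → Ordinal → Set Ordinal) : Prop :=
  ∀ β < lam.ord, Order.IsSuccLimit β → ∃ i < θ.ord, ∃ C ⊆ D i β, IsClubIn C β

/-- `D` is normal: the order types of its entries are bounded below `lam`. -/
def NormalMatrix (θ lam : Cardinal) (D : Ordinal → Ordinal → Set Ordinal) : Prop :=
  ∃ b < lam.ord, ∀ i < θ.ord, ∀ γ < lam.ord, otp (D i γ) < b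

/-- `β_D`: the least ordinal strictly above the order types of all entries of `D`. -/
def matrixBound (θ lam : Cardinal) (D : Ordinal → Ordinal → Set Ordinal) : Ordinal :=
  sInf {b | ∀ i < θ.ord, ∀ γ < lam.ord, otp (D i γ) < b}

/-- `D` is downward coherent. -/
def DownwardCoherent (θ lam : Cardinal) (D : Ordinal → Ordinal → Set Ordinal) : Prop :=
  ∀ α β, α < β → β < lam.ord → ∀ i < θ.ord, ∃ j < θ.ord, D i β ∩ Set.Iio α ⊆ D j α

/-- `D` is locally downward coherent. -/
def LocallyDownwardCoherent (θ lam : Cardinal.{u})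
    (D : Ordinal.{u} → Ordinal.{u} → Set Ordinal.{u}) : Prop :=
  ∀ X : Set Ordinal.{u}, X ⊆ Set.Iio lam.ord → #X ≤ Cardinal.lift.{u + 1} θ →
    ∃ γX < lam.ord, ∀ β < lam.ord, ∀ i < θ.ord, ∃ j < θ.ord,
      X ∩ D i β ⊆ X ∩ D j γX

/-- `D` is strongly locally downward coherent. -/
def StronglyLocallyDownwardCoherent (θ lam : Cardinal.{u})
    (D : Ordinal.{u} → Ordinal.{u} → Set Ordinal.{u}) : Prop :=
  ∀ X : Set Ordinal.{u}, X ⊆ Set.Iio lam.ord → #X ≤ Cardinal.lift.{u + 1} θ →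
    ∃ γX < lam.ord, ∀ β, γX ≤ β → β < lam.ord →
      ∃ i < θ.ord, ∀ j, i ≤ j → j < θ.ord → X ∩ D j β = X ∩ D j γX

/-- `D` covers `[T]^κ`. -/
def Covers (θ lam : Cardinal.{u}) (D : Ordinal.{u} → Ordinal.{u} → Set Ordinal.{u})
    (T : Set Ordinal.{u}) (κ : Cardinal.{u}) : Prop :=
  ∀ X ⊆ T, #X = Cardinal.lift.{u + 1} κ → ∃ i < θ.ord, ∃ β < lam.ord, X ⊆ D i β

/-- The covering property `CP(D)`. -/
def CP (θ lam : Cardinal) (D : Ordinal → Ordinal → Set Ordinal) : Prop :=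
  ∃ T ⊆ Set.Iio lam.ord, IsUnboundedIn T lam.ord ∧ Covers θ lam D T θ

/-- `CP(lam, θ)`: `CP(D)` holds for every locally downward coherent `θ`-covering matrix `D`. -/
def CPAll (θ lam : Cardinal) : Prop :=
  ∀ D, IsCoveringMatrix θ lam D → LocallyDownwardCoherent θ lam D → CP θ lam D

/-- `A_D`: the set of good points for `D`. -/
def goodPoints (θ lam : Cardinal) (D : Ordinal → Ordinal → Set Ordinal) : Set Ordinal :=
  {β | β < lam.ord ∧ θ < Ordinal.cof β ∧
    ∃ A ⊆ Set.Iio β, IsUnboundedIn A β ∧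
      ∀ γ < β, ∃ α < β, ∃ i < θ.ord, A ∩ Set.Iio γ ⊆ D i α}

/-- `θ^{+η}`: the `η`-th iterated cardinal successor of `θ`. -/
def iterSucc (θ : Cardinal) (η : Ordinal) : Cardinal :=
  Ordinal.limitRecOn η θ (fun _ ih => Order.succ ih)
    (fun o _ ih => ⨆ i : Set.Iio o, ih i.1 i.2)

/-- `f <* g` mod bounded subsets of `θ`. -/
def ltStar (θ : Cardinal) (f g : Ordinal → Ordinal) : Prop :=
  ∃ i < θ.ord, ∀ j, i ≤ j → j < θ.ord → f j < g j

/-- `⟨f β : β < δ⟩` is a club-increasing sequence of functions from `θ` to the ordinals. -/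
def ClubIncreasing (θ : Cardinal) (δ : Ordinal) (f : Ordinal → Ordinal → Ordinal) : Prop :=
  (∀ β < δ, ∀ i j, i ≤ j → j < θ.ord → f β i ≤ f β j) ∧
  (∀ α β, α < β → β < δ → ltStar θ (f α) (f β)) ∧
  (∀ β < δ, θ < Ordinal.cof β → ∃ C, IsClubIn C β ∧ ∃ i < θ.ord,
    ∀ α ∈ C, ∀ j, i ≤ j → j < θ.ord → f α j < f β j)

/-- `γ_f`: the least ordinal strictly above all values of the sequence. -/
def seqBound (θ : Cardinal) (δ : Ordinal) (f : Ordinal → Ordinal → Ordinal) : Ordinal :=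
  sInf {γ | ∀ β < δ, ∀ i < θ.ord, f β i < γ}

/-- `g` is an exact upper bound for `⟨f β : β < δ⟩` with respect to `<*` on `θ`. -/
def IsEub (θ : Cardinal) (δ : Ordinal) (f : Ordinal → Ordinal → Ordinal)
    (g : Ordinal → Ordinal) : Prop :=
  (∀ β < δ, ltStar θ (f β) g) ∧
  ∀ h : Ordinal → Ordinal, ltStar θ h g → ∃ β < δ, ltStar θ h (f β)

/-- The simultaneous stationary reflection principle `R(lam, θ)`. -/
def RPrinciple (lam θ : Cardinal) : Prop :=
  ∃ S ⊆ Set.Iio lam.ord, IsStationaryIn S lam.ord ∧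
    ∀ T : Ordinal → Set Ordinal,
      (∀ j < θ.ord, T j ⊆ S ∧ IsStationaryIn (T j) lam.ord) →
      ∃ α < lam.ord, ℵ₀ < Ordinal.cof α ∧
        ∀ j < θ.ord, IsStationaryIn (T j ∩ Set.Iio α) α

/-- A `□_κ`-sequence. -/
def IsSquareSeq (κ : Cardinal) (C : Ordinal → Set Ordinal) : Prop :=
  ∀ β < (Order.succ κ).ord, Order.IsSuccLimit β →
    IsClubIn (C β) β ∧ otp (C β) ≤ κ.ord ∧
    ∀ α ∈ C β, 0 < α → IsAccPt (C β) α → C β ∩ Set.Iio α = C α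

/-- The square principle `□_κ`. -/
def SquarePrinciple (κ : Cardinal) : Prop := ∃ C, IsSquareSeq κ C

/-- `f <* g` mod finite on `B ⊆ ω`. -/
def ltStarB (B : Set ℕ) (f g : ℕ → Ordinal) : Prop :=
  ∃ m, ∀ n ∈ B, m ≤ n → f n < g n

/-- `g` is an exact upper bound for `⟨f α : α < δ⟩` with respect to `<*` mod finite on `B`. -/
def IsEubB (B : Set ℕ) (δ : Ordinal) (f : Ordinal → ℕ → Ordinal) (g : ℕ → Ordinal) : Prop :=
  (∀ α < δ, ltStarB B (f α) g) ∧
  ∀ h : ℕ → Ordinal, ltStarB B h g → ∃ α < δ, ltStarB B h (f α)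

/-- A scale of length `ℵ_{ω+1}` in `∏_{n ∈ B} ℵ_n`. -/
def IsScale (B : Set ℕ) (f : Ordinal → ℕ → Ordinal) : Prop :=
  (∀ α < (Cardinal.aleph (Ordinal.omega0 + 1)).ord, ∀ n ∈ B, f α n < (Cardinal.aleph n).ord) ∧
  (∀ α β, α < β → β < (Cardinal.aleph (Ordinal.omega0 + 1)).ord → ltStarB B (f α) (f β)) ∧
  (∀ g : ℕ → Ordinal, (∀ n ∈ B, g n < (Cardinal.aleph n).ord) →
    ∃ α < (Cardinal.aleph (Ordinal.omega0 + 1)).ord, ltStarB B g (f α))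


universe v

theorem Ordinal.exists_lt_forall_exists_eq_and_le {ι : Type*} {α : Type v} {o : Ordinal.{u}}
    (b : ι → Ordinal.{u}) (hb : ∀ x, b x < o) (f : ι → α)
    (hα : Cardinal.lift.{u} #α < Cardinal.lift.{v} o.cof) :
    ∃ γ < o, ∀ x, ∃ y, f y = f x ∧ b y ≤ γ := by
  choose g hg using fun a : range f => a.2
  have hbdd : BddAbove (range fun a => b (g a)) :=
    ⟨o, by rintro _ ⟨a, rfl⟩; exact (hb _).le⟩
  refine ⟨⨆ a, b (g a), ?_, fun x => ⟨g ⟨f x, x, rfl⟩, hg _, le_ciSup hbdd _⟩⟩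
  refine Ordinal.lift_iSup_lt_of_lt_cof ?_ fun a => hb (g a)
  rw [← Ordinal.lift_cof]
  exact (Cardinal.lift_le.mpr (Cardinal.mk_set_le (range f))).trans_lt hα

theorem IsCoveringMatrix.exists_subset_of_le {θ lam : Cardinal}
    {D : Ordinal → Ordinal → Set Ordinal} (hD : IsCoveringMatrix θ lam D) {β γ : Ordinal}
    (hβγ : β ≤ γ) (hγ : γ < lam.ord) {i : Ordinal} (hi : i < θ.ord) :
    ∃ j < θ.ord, D i β ⊆ D j γ := by
  rcases hβγ.lt_or_eq with hlt | rfl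
  · exact hD.2.2 β γ hlt hγ i hi
  · exact ⟨i, hi, subset_rfl⟩

/- There are at most `2 ^ θ < cf lam` traces `X ∩ D i β`; bounding one witness `β` for each
trace gives `γX`, and coherence pushes each witness up to `γX`. -/
theorem IsCoveringMatrix.locallyDownwardCoherent {θ lam : Cardinal.{u}}
    {D : Ordinal.{u} → Ordinal.{u} → Set Ordinal.{u}} (hD : IsCoveringMatrix θ lam D)
    (h2 : 2 ^ θ < lam.ord.cof) : LocallyDownwardCoherent θ lam D := by
  intro X _ hX
  let trace (p : {p : Ordinal × Ordinal // p.1 < lam.ord ∧ p.2 < θ.ord}) : Set X :=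
    Subtype.val ⁻¹' D p.1.2 p.1.1
  have htraces : Cardinal.lift.{u, u + 1} #(Set X) < Cardinal.lift.{u + 1} lam.ord.cof := by
    rw [Cardinal.lift_id'.{u, u + 1}, Cardinal.mk_set]
    calc 2 ^ #X ≤ 2 ^ Cardinal.lift.{u + 1} θ := Cardinal.power_le_power_left two_ne_zero hX
      _ = Cardinal.lift.{u + 1} (2 ^ θ) := (Cardinal.lift_two_power θ).symm
      _ < Cardinal.lift.{u + 1} lam.ord.cof := Cardinal.lift_lt.mpr h2
  obtain ⟨γ, hγ, hwitness⟩ :=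
    Ordinal.exists_lt_forall_exists_eq_and_le (α := Set X) (fun p => p.1.1) (fun p => p.2.1)
      trace htraces
  refine ⟨γ, hγ, fun β hβ i hi => ?_⟩
  obtain ⟨⟨⟨β', i'⟩, _, hi'⟩, htrace, hβ'γ⟩ := hwitness ⟨(β, i), hβ, hi⟩
  obtain ⟨j, hj, hsub⟩ := hD.exists_subset_of_le hβ'γ hγ hi'
  refine ⟨j, hj, ?_⟩
  rw [← Subtype.preimage_coe_eq_preimage_coe_iff.mp htrace]
  exact inter_subset_inter_right X hsub

theorem stmt0_general (θ lam : Cardinal) (hlam : lam.IsRegular)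
    (h2 : 2 ^ θ < lam) (D : Ordinal → Ordinal → Set Ordinal)
    (hD : IsCoveringMatrix θ lam D) : LocallyDownwardCoherent θ lam D :=
  hD.locallyDownwardCoherent (by rwa [hlam.cof_ord])

/-- If `θ < lam` are regular cardinals with `2 ^ θ < lam`, then every
`θ`-covering matrix for `lam` is locally downward coherent. -/
theorem stmt0 (θ lam : Cardinal) (hθ : θ.IsRegular) (hlam : lam.IsRegular) (hθlam : θ < lam)
    (h2 : 2 ^ θ < lam) (D : Ordinal → Ordinal → Set Ordinal)
    (hD : IsCoveringMatrix θ lam D) : LocallyDownwardCoherent θ lam D :=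
  stmt0_general θ lam hlam h2 D hD

end
end

section
/- Suppose θ < λ are regular cardinals with 2^θ < λ, and D is a transitive θ-covering matrix for λ. Then D is strongly locally downward coherent. -/
noncomputable section

universe u

open Cardinal Set

/-
Fix `X` of size at most `θ`. Each `β < λ` determines its trace `⟨X ∩ D(i,β) : i < θ⟩`, and there
are at most `(2^θ)^θ = 2^θ < λ` traces, so by regularity of `λ` one trace `t` is attained
unboundedly often below `λ`; let `γ_X` attain it. Given `γ_X ≤ β < λ`, pick `γ > β` attaining `t`.
By transitivity, for all large enough `j` we have `D(j,γ_X) ⊆ D(j,β) ⊆ D(j,γ)`, and the outer two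
sets have the same trace on `X`, so `X ∩ D(j,β) = X ∩ D(j,γ_X)`.
-/

universe v

theorem exists_unbounded_fiber_of_lt_cof {α : Type v} (f : Ordinal.{u} → α) {o : Ordinal.{u}}
    (hα : Cardinal.lift.{u} #α < Cardinal.lift.{v} o.cof) :
    ∃ a, ∀ b < o, ∃ β, b < β ∧ β < o ∧ f β = a := by
  by_contra! h
  choose g hg hfg using h
  have hsup : ⨆ a, g a + 1 < o :=
    Ordinal.lift_iSup_add_one_lt_of_lt_cof (by rwa [← Ordinal.lift_cof]) hg
  have hbdd : BddAbove (range fun a => g a + 1) := ⟨o, by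
    rintro _ ⟨a, rfl⟩
    exact Order.add_one_le_iff.mpr (hg a)⟩
  exact hfg _ _ (Order.add_one_le_iff.mp (le_ciSup hbdd _)) hsup rfl

theorem mk_fun_set_le_two_power {ι β : Type v} {κ : Cardinal.{v}} (hκ : ℵ₀ ≤ κ)
    (hι : #ι ≤ κ) (hβ : #β ≤ κ) : #(ι → Set β) ≤ 2 ^ κ :=
  calc #(ι → Set β) = ((2 : Cardinal) ^ #β) ^ #ι := by rw [← power_def, mk_set]
    _ ≤ (2 ^ κ) ^ κ := (power_le_power_right (power_le_power_left two_ne_zero hβ)).trans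
        (power_le_power_left (power_ne_zero _ two_ne_zero) hι)
    _ = 2 ^ κ := by rw [← power_mul, mul_eq_self hκ]

theorem lift_mk_traces_lt_cof {θ lam : Cardinal.{u}} (hθ : ℵ₀ ≤ θ) (hlam : lam.IsRegular)
    (h2 : 2 ^ θ < lam) {X : Set Ordinal.{u}} (hX : #X ≤ Cardinal.lift.{u + 1} θ) :
    Cardinal.lift.{u} #(Set.Iio θ.ord → Set X) < Cardinal.lift.{u + 1} lam.ord.cof := by
  rw [hlam.cof_ord, Cardinal.lift_id'.{u, u + 1}]
  calc #(Set.Iio θ.ord → Set X) ≤ 2 ^ Cardinal.lift.{u + 1} θ :=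
        mk_fun_set_le_two_power (by simpa using hθ)
          (by rw [Cardinal.mk_Iio_ordinal, Cardinal.card_ord]) hX
    _ = Cardinal.lift (2 ^ θ) := by rw [Cardinal.lift_power, Cardinal.lift_two]
    _ < Cardinal.lift lam := Cardinal.lift_lt.mpr h2

namespace TransitiveMatrix

variable {θ lam : Cardinal.{u}} {D : Ordinal.{u} → Ordinal.{u} → Set Ordinal.{u}}

theorem eventually_subset (htr : TransitiveMatrix θ lam D) (hD : IsCoveringMatrix θ lam D)
    {α β : Ordinal.{u}} (hαβ : α < β) (hβ : β < lam.ord) :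
    ∃ i < θ.ord, ∀ j, i ≤ j → j < θ.ord → D j α ⊆ D j β := by
  have hα : α ∈ ⋃ i ∈ Iio θ.ord, D i β := by rwa [hD.1 β hβ]
  simp only [mem_iUnion, mem_Iio] at hα
  obtain ⟨i, hi, hαi⟩ := hα
  refine ⟨i, hi, fun j hij hj => htr α β hαβ hβ j hj ?_⟩
  rcases hij.eq_or_lt with rfl | hlt
  · exact hαi
  · exact hD.2.1 β hβ i j hlt hj hαi

end TransitiveMatrix

theorem stmt1_general (θ lam : Cardinal) (hθ : θ.IsRegular) (hlam : lam.IsRegular)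
    (h2 : 2 ^ θ < lam) (D : Ordinal → Ordinal → Set Ordinal)
    (hD : IsCoveringMatrix θ lam D) (htr : TransitiveMatrix θ lam D) :
    StronglyLocallyDownwardCoherent θ lam D := by
  intro X _ hX
  obtain ⟨t, ht⟩ := exists_unbounded_fiber_of_lt_cof
    (fun β (i : Set.Iio θ.ord) => ((↑) : X → Ordinal) ⁻¹' D i β)
    (lift_mk_traces_lt_cof hθ.aleph0_le hlam h2 hX)
  obtain ⟨γX, -, hγX, hγXt⟩ := ht 0 (Cardinal.ord_pos.mpr hlam.pos)
  refine ⟨γX, hγX, fun β hγXβ hβ => ?_⟩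
  obtain ⟨γ, hβγ, hγ, hγt⟩ := ht β hβ
  obtain ⟨i₂, hi₂, hβγ_sub⟩ := htr.eventually_subset hD hβγ hγ
  rcases hγXβ.eq_or_lt with rfl | hγXβ
  · exact ⟨i₂, hi₂, fun _ _ _ => rfl⟩
  obtain ⟨i₁, hi₁, hγXβ_sub⟩ := htr.eventually_subset hD hγXβ hβ
  refine ⟨max i₁ i₂, max_lt hi₁ hi₂, fun j hj hjθ => ?_⟩
  have hsame : X ∩ D j γ = X ∩ D j γX := Subtype.preimage_coe_eq_preimage_coe_iff.mp
    (congrFun (hγt.trans hγXt.symm) ⟨j, hjθ⟩)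
  have hβ_sub_γX : X ∩ D j β ⊆ X ∩ D j γX :=
    hsame ▸ inter_subset_inter_right X (hβγ_sub j (le_of_max_le_right hj) hjθ)
  exact hβ_sub_γX.antisymm (inter_subset_inter_right X (hγXβ_sub j (le_of_max_le_left hj) hjθ))

/-- If `θ < lam` are regular cardinals with `2 ^ θ < lam`, then every transitive
`θ`-covering matrix for `lam` is strongly locally downward coherent. -/
theorem stmt1 (θ lam : Cardinal) (hθ : θ.IsRegular) (hlam : lam.IsRegular) (hθlam : θ < lam)
    (h2 : 2 ^ θ < lam) (D : Ordinal → Ordinal → Set Ordinal)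
    (hD : IsCoveringMatrix θ lam D) (htr : TransitiveMatrix θ lam D) :
    StronglyLocallyDownwardCoherent θ lam D :=
  stmt1_general θ lam hθ hlam h2 D hD htr

end
end

section
/- Suppose θ < λ are regular cardinals, D is a θ-covering matrix for λ, T ⊆ λ is unbounded, and D covers [T]^θ. Suppose κ < λ is a cardinal such that either κ = θ^{+η} for some ordinal η < θ, or κ^θ < λ. Then D covers [T]^κ, i.e., for every X ⊆ T with |X| = κ there are i < θ and β < λ with X ⊆ D(i,β). -/
noncomputable section

universe u

open Cardinal Set

/-!
Sets of fewer than `θ` ordinals below `λ` are covered: each point lies in some `D(i, β)`, the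
levels `β` are bounded below the regular `λ`, the directedness of `D` moves all points to one
level, and the indices `i` are bounded below the regular `θ`. Covering then climbs the cardinals.
At a successor `ν = μ⁺ > θ`, a set of size `ν` is an increasing union of `ν` pieces of size `μ`;
their covers can be moved to one common level `β`, and since `cf ν > θ` one index `i` serves
cofinally many pieces, so `D(i, β)` contains the whole set. At a limit `θ^{+η}` with `η < θ` the
set is a union of fewer than `θ` smaller pieces. If `κ ^ θ < λ`, all `θ`-subsets of `X` have
covers at one common level `β`; were no `D(i, β)` to contain `X`, picking for each `i < θ` a
point of `X` outside `D(i, β)` would give a `θ`-subset covered by no `D(j, β)`.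
-/

def IsCovered (θ lam : Cardinal.{u}) (D : Ordinal.{u} → Ordinal.{u} → Set Ordinal.{u})
    (X : Set Ordinal.{u}) : Prop :=
  ∃ i < θ.ord, ∃ β < lam.ord, X ⊆ D i β

def CoversUpTo (θ lam : Cardinal.{u}) (D : Ordinal.{u} → Ordinal.{u} → Set Ordinal.{u})
    (T : Set Ordinal.{u}) (μ : Cardinal.{u}) : Prop :=
  ∀ X ⊆ T, #X ≤ Cardinal.lift.{u + 1} μ → IsCovered θ lam D X

theorem IsCovered.mono {θ lam : Cardinal.{u}} {D : Ordinal.{u} → Ordinal.{u} → Set Ordinal.{u}}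
    {X Y : Set Ordinal.{u}} (hY : IsCovered θ lam D Y) (hXY : X ⊆ Y) : IsCovered θ lam D X :=
  let ⟨i, hi, β, hβ, hYD⟩ := hY
  ⟨i, hi, β, hβ, hXY.trans hYD⟩

theorem Cardinal.IsRegular.exists_forall_lt {c : Cardinal.{u}} (hc : c.IsRegular)
    {ι : Type (u + 1)} {f : ι → Ordinal.{u}} (hι : #ι < Cardinal.lift.{u + 1} c)
    (hf : ∀ i, f i < c.ord) :
    ∃ β < c.ord, ∀ i, f i < β := by
  have hbdd : BddAbove (range fun i => f i + 1) :=
    ⟨c.ord, by rintro _ ⟨i, rfl⟩; exact Order.add_one_le_of_lt (hf i)⟩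
  refine ⟨⨆ i, f i + 1, Ordinal.lift_iSup_add_one_lt_of_lt_cof ?_ hf,
    fun i => (lt_add_one (f i)).trans_le (le_ciSup hbdd i)⟩
  rwa [lift_id'.{u, u + 1}, ← Ordinal.lift_cof, hc.cof_ord]

theorem Cardinal.exists_injective_lt_ord {X : Type (u + 1)} {c : Cardinal.{u}}
    (h : #X ≤ lift.{u + 1} c) : ∃ g : X → Ordinal.{u}, Function.Injective g ∧ ∀ x, g x < c.ord := by
  rw [← card_ord c, ← mk_Iio_ordinal] at h
  obtain ⟨e⟩ := h
  exact ⟨fun x => e x, Subtype.val_injective.comp e.injective, fun x => (e x).2⟩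

theorem Cardinal.mk_image_val_setOf_lt_le {X : Set Ordinal.{u}} {g : X → Ordinal.{u}}
    (hg : Function.Injective g) (α : Ordinal.{u}) :
    #(Subtype.val '' {x | g x < α}) ≤ lift.{u + 1} α.card := by
  rw [← mk_Iio_ordinal]
  refine mk_image_le.trans (mk_le_of_injective (f := fun x : {x | g x < α} => ⟨g x, x.2⟩) ?_)
  intro x y hxy
  exact Subtype.ext (hg (congrArg Subtype.val hxy))

theorem iterSucc_zero (θ : Cardinal.{u}) : iterSucc θ 0 = θ :=
  Ordinal.limitRecOn_zero _ _ _

theorem iterSucc_add_one (θ : Cardinal.{u}) (η : Ordinal.{u}) :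
    iterSucc θ (η + 1) = Order.succ (iterSucc θ η) :=
  Ordinal.limitRecOn_add_one _ _ _ _

theorem iterSucc_limit (θ : Cardinal.{u}) {η : Ordinal.{u}} (h : Order.IsSuccLimit η) :
    iterSucc θ η = ⨆ ρ : Iio η, iterSucc θ ρ :=
  Ordinal.limitRecOn_limit _ _ _ _ h

theorem iterSucc_mono (θ : Cardinal.{u}) {η₁ η₂ : Ordinal.{u}} (h : η₁ ≤ η₂) :
    iterSucc θ η₁ ≤ iterSucc θ η₂ := by
  induction η₂ using Ordinal.limitRecOn with
  | zero => rw [nonpos_iff_eq_zero.1 h]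
  | add_one η ih =>
    rcases h.eq_or_lt with rfl | h'
    · exact le_rfl
    · exact (ih (Order.lt_add_one_iff.1 h')).trans
        ((Order.le_succ _).trans_eq (iterSucc_add_one θ η).symm)
  | limit η hη _ =>
    rcases h.eq_or_lt with rfl | h'
    · exact le_rfl
    · rw [iterSucc_limit θ hη]
      exact le_ciSup Cardinal.bddAbove_of_small (⟨η₁, h'⟩ : Iio η)

theorem le_iterSucc (θ : Cardinal.{u}) (η : Ordinal.{u}) : θ ≤ iterSucc θ η :=
  (iterSucc_zero θ).symm.trans_le (iterSucc_mono θ zero_le)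

namespace IsCoveringMatrix

variable {θ lam : Cardinal.{u}} {D : Ordinal.{u} → Ordinal.{u} → Set Ordinal.{u}}

theorem exists_common_level (hD : IsCoveringMatrix θ lam D) (hlam : lam.IsRegular)
    {ι : Type (u + 1)} (Y : ι → Set Ordinal.{u}) (hι : #ι < lift.{u + 1} lam)
    (hY : ∀ s, IsCovered θ lam D (Y s)) : ∃ β < lam.ord, ∀ s, ∃ j < θ.ord, Y s ⊆ D j β := by
  choose i hi b hb hYb using hY
  obtain ⟨β, hβ, hbβ⟩ := hlam.exists_forall_lt hι hb
  refine ⟨β, hβ, fun s => ?_⟩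
  obtain ⟨j, hj, hDj⟩ := hD.2.2 (b s) β (hbβ s) hβ (i s) (hi s)
  exact ⟨j, hj, (hYb s).trans hDj⟩

theorem isCovered_iUnion (hD : IsCoveringMatrix θ lam D) (hθ : θ.IsRegular)
    (hlam : lam.IsRegular) (hθlam : θ < lam) {ι : Type (u + 1)} (Y : ι → Set Ordinal.{u})
    (hι : #ι < lift.{u + 1} θ) (hY : ∀ s, IsCovered θ lam D (Y s)) :
    IsCovered θ lam D (⋃ s, Y s) := by
  obtain ⟨β, hβ, hYβ⟩ := hD.exists_common_level hlam Y (hι.trans (lift_lt.2 hθlam)) hY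
  choose j hj hYj using hYβ
  obtain ⟨i, hi, hji⟩ := hθ.exists_forall_lt hι hj
  exact ⟨i, hi, β, hβ, iUnion_subset fun s => (hYj s).trans (hD.2.1 β hβ _ _ (hji s) hi)⟩

theorem isCovered_singleton (hD : IsCoveringMatrix θ lam D) (hlam : lam.IsRegular)
    {x : Ordinal.{u}} (hx : x < lam.ord) : IsCovered θ lam D {x} := by
  have hx₁ : Order.succ x < lam.ord := (isSuccLimit_ord hlam.aleph0_le).succ_lt hx
  have hmem : x ∈ ⋃ i ∈ Iio θ.ord, D i (Order.succ x) := by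
    rw [hD.1 _ hx₁]
    exact Order.lt_succ x
  obtain ⟨i, hi, hxi⟩ := mem_iUnion₂.1 hmem
  exact ⟨i, hi, _, hx₁, singleton_subset_iff.2 hxi⟩

theorem isCovered_of_mk_lt (hD : IsCoveringMatrix θ lam D) (hθ : θ.IsRegular)
    (hlam : lam.IsRegular) (hθlam : θ < lam) {X : Set Ordinal.{u}} (hX : X ⊆ Iio lam.ord)
    (hXθ : #X < lift.{u + 1} θ) : IsCovered θ lam D X := by
  rw [← iUnion_of_singleton_coe X]
  exact hD.isCovered_iUnion hθ hlam hθlam _ hXθ fun x => hD.isCovered_singleton hlam (hX x.2)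

theorem coversUpTo_of_covers (hD : IsCoveringMatrix θ lam D) (hθ : θ.IsRegular)
    (hlam : lam.IsRegular) (hθlam : θ < lam) {T : Set Ordinal.{u}} (hT : T ⊆ Iio lam.ord)
    (hcov : Covers θ lam D T θ) : CoversUpTo θ lam D T θ := fun X hXT hX =>
  hX.lt_or_eq.elim (hD.isCovered_of_mk_lt hθ hlam hθlam (hXT.trans hT)) (hcov X hXT)

theorem isCovered_iUnion_of_monotone (hD : IsCoveringMatrix θ lam D) (hlam : lam.IsRegular)
    {ν : Cardinal.{u}} (hν : ν.IsRegular) (hθν : θ < ν) (hνlam : ν < lam)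
    (Y : Iio ν.ord → Set Ordinal.{u}) (hY : Monotone Y) (hYc : ∀ α, IsCovered θ lam D (Y α)) :
    IsCovered θ lam D (⋃ α, Y α) := by
  have hιν : #(Iio ν.ord) < lift.{u + 1} lam := by
    rw [mk_Iio_ordinal, card_ord]
    exact lift_lt.2 hνlam
  obtain ⟨β, hβ, hYβ⟩ := hD.exists_common_level hlam Y hιν hYc
  choose j hj hYj using hYβ
  have hfibers : IsCofinal (⋃ ξ : Iio θ.ord, {α | j α = ξ}) :=
    fun α => ⟨α, mem_iUnion.2 ⟨⟨j α, hj α⟩, rfl⟩, le_rfl⟩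
  have hθcof : #(Iio θ.ord) < Order.cof (Iio ν.ord) := by
    rw [Ordinal.cof_Iio, ← Ordinal.lift_cof, hν.cof_ord, mk_Iio_ordinal, card_ord]
    exact lift_lt.2 hθν
  obtain ⟨ξ, hξ⟩ := isCofinal_of_isCofinal_iUnion hfibers hθcof
  refine ⟨ξ, ξ.2, β, hβ, iUnion_subset fun α => ?_⟩
  obtain ⟨α', hα', hαα'⟩ := hξ α
  exact (hY hαα').trans (hα' ▸ hYj α')

theorem coversUpTo_succ (hD : IsCoveringMatrix θ lam D) (hlam : lam.IsRegular)
    {T : Set Ordinal.{u}} {μ : Cardinal.{u}} (hμ : ℵ₀ ≤ μ) (hθμ : θ ≤ μ)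
    (hμlam : Order.succ μ < lam) (hcov : CoversUpTo θ lam D T μ) :
    CoversUpTo θ lam D T (Order.succ μ) := by
  intro X hXT hX
  obtain ⟨g, hg, hgX⟩ := exists_injective_lt_ord hX
  have hsucc : Order.IsSuccLimit (Order.succ μ).ord :=
    isSuccLimit_ord (hμ.trans (Order.le_succ μ))
  have hXY : X ⊆ ⋃ α : Iio (Order.succ μ).ord, Subtype.val '' {x : X | g x < α} :=
    fun x hx => mem_iUnion.2
      ⟨⟨_, hsucc.succ_lt (hgX ⟨x, hx⟩)⟩, ⟨x, hx⟩, Order.lt_succ (g ⟨x, hx⟩), rfl⟩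
  refine (hD.isCovered_iUnion_of_monotone hlam (isRegular_succ hμ)
    (hθμ.trans_lt (Order.lt_succ μ)) hμlam _ ?_ fun α => hcov _ ?_ ?_).mono hXY
  · exact fun α α' h => image_mono fun x (hx : g x < α) => hx.trans_le h
  · exact (Subtype.coe_image_subset _ _).trans hXT
  · exact (mk_image_val_setOf_lt_le hg α).trans (lift_le.2 (Order.lt_succ_iff.1 (lt_ord.1 α.2)))

theorem coversUpTo_iSup (hD : IsCoveringMatrix θ lam D) (hθ : θ.IsRegular)
    (hlam : lam.IsRegular) (hθlam : θ < lam) {T : Set Ordinal.{u}} {ι : Type (u + 1)}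
    (hι : #ι < lift.{u + 1} θ) {f : ι → Cardinal.{u}} (hcov : ∀ i, CoversUpTo θ lam D T (f i)) :
    CoversUpTo θ lam D T (⨆ i, f i) := by
  intro X hXT hX
  obtain ⟨g, hg, hgX⟩ := exists_injective_lt_ord hX
  have hXY : X ⊆ ⋃ i, Subtype.val '' {x : X | g x < (f i).ord} := fun x hx => by
    obtain ⟨i, hi⟩ := exists_lt_of_lt_ciSup' (lt_ord.1 (hgX ⟨x, hx⟩))
    exact mem_iUnion.2 ⟨i, ⟨x, hx⟩, lt_ord.2 hi, rfl⟩
  refine (hD.isCovered_iUnion hθ hlam hθlam _ hι fun i =>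
    hcov i _ ((Subtype.coe_image_subset _ _).trans hXT) ?_).mono hXY
  simpa using mk_image_val_setOf_lt_le hg (f i).ord

theorem coversUpTo_iterSucc (hD : IsCoveringMatrix θ lam D) (hθ : θ.IsRegular)
    (hlam : lam.IsRegular) (hθlam : θ < lam) {T : Set Ordinal.{u}}
    (hcov : CoversUpTo θ lam D T θ) (η : Ordinal.{u}) (hη : η < θ.ord)
    (hηlam : iterSucc θ η < lam) : CoversUpTo θ lam D T (iterSucc θ η) := by
  induction η using Ordinal.limitRecOn with
  | zero => rwa [iterSucc_zero]
  | add_one η ih =>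
    rw [iterSucc_add_one] at hηlam ⊢
    exact hD.coversUpTo_succ hlam (hθ.aleph0_le.trans (le_iterSucc θ η)) (le_iterSucc θ η)
      hηlam (ih ((lt_add_one η).trans hη) ((Order.le_succ _).trans_lt hηlam))
  | limit η hlim ih =>
    rw [iterSucc_limit θ hlim]
    refine hD.coversUpTo_iSup hθ hlam hθlam ?_ fun ρ =>
      ih ρ ρ.2 (ρ.2.trans hη) ((iterSucc_mono θ ρ.2.le).trans_lt hηlam)
    rw [mk_Iio_ordinal]
    exact lift_lt.2 (lt_ord.1 hη)

theorem isCovered_of_mk_arrow_lt (hD : IsCoveringMatrix θ lam D) (hlam : lam.IsRegular)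
    {X : Set Ordinal.{u}} (hX : ∀ Z ⊆ X, #Z ≤ lift.{u + 1} θ → IsCovered θ lam D Z)
    (hpow : #(Iio θ.ord → X) < lift.{u + 1} lam) : IsCovered θ lam D X := by
  by_contra hXc
  obtain ⟨β, hβ, hβcov⟩ := hD.exists_common_level hlam
    (fun g : Iio θ.ord → X => range fun ξ => (g ξ : Ordinal)) hpow fun g =>
      hX _ (range_subset_iff.2 fun ξ => (g ξ).2)
        (mk_range_le.trans (by rw [mk_Iio_ordinal, card_ord]))
  have hout : ∀ ξ : Iio θ.ord, ∃ x : X, (x : Ordinal) ∉ D ξ β := fun ξ => by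
    by_contra! h
    exact hXc ⟨ξ, ξ.2, β, hβ, fun x hx => h ⟨x, hx⟩⟩
  choose g hg using hout
  obtain ⟨j, hj, hgj⟩ := hβcov g
  exact hg ⟨j, hj⟩ (hgj ⟨⟨j, hj⟩, rfl⟩)

end IsCoveringMatrix

theorem stmt2_general (θ lam : Cardinal) (hθ : θ.IsRegular) (hlam : lam.IsRegular) (hθlam : θ < lam)
    (D : Ordinal → Ordinal → Set Ordinal) (hD : IsCoveringMatrix θ lam D)
    (T : Set Ordinal) (hT : T ⊆ Set.Iio lam.ord)
    (hcov : Covers θ lam D T θ) (κ : Cardinal) (hκ : κ < lam)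
    (hyp : (∃ η < θ.ord, κ = iterSucc θ η) ∨ κ ^ θ < lam) :
    Covers θ lam D T κ := by
  have hθcov := hD.coversUpTo_of_covers hθ hlam hθlam hT hcov
  intro X hXT hX
  rcases hyp with ⟨η, hη, rfl⟩ | hpow
  · exact hD.coversUpTo_iterSucc hθ hlam hθlam hθcov η hη hκ X hXT hX.le
  · refine hD.isCovered_of_mk_arrow_lt hlam (fun Z hZX => hθcov Z (hZX.trans hXT)) ?_
    rwa [mk_arrow, lift_id, lift_id, mk_Iio_ordinal, card_ord, hX, ← lift_power, lift_lt]

/-- If `D` covers `[T]^θ` for an unbounded `T ⊆ lam` and `κ < lam` is either an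
iterated successor `θ^{+η}` with `η < θ`, or satisfies `κ ^ θ < lam`, then `D` covers `[T]^κ`. -/
theorem stmt2 (θ lam : Cardinal) (hθ : θ.IsRegular) (hlam : lam.IsRegular) (hθlam : θ < lam)
    (D : Ordinal → Ordinal → Set Ordinal) (hD : IsCoveringMatrix θ lam D)
    (T : Set Ordinal) (hT : T ⊆ Set.Iio lam.ord) (hTu : IsUnboundedIn T lam.ord)
    (hcov : Covers θ lam D T θ) (κ : Cardinal) (hκ : κ < lam)
    (hyp : (∃ η < θ.ord, κ = iterSucc θ η) ∨ κ ^ θ < lam) :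
    Covers θ lam D T κ :=
  stmt2_general θ lam hθ hlam hθlam D hD T hT hcov κ hκ hyp

end
end

section
/- Let θ and λ be regular cardinals with θ⁺ < λ, and let D be a downward coherent θ-covering matrix for λ. Then A_D = S^λ_{>θ}, i.e., every ordinal below λ of cofinality greater than θ is a good point for D. -/
noncomputable section

universe u

open Cardinal Set

/-! Fewer than `cof β` bounded sets cannot cover `β`, so some column `D i β` is unbounded in
`β`; it witnesses that `β` is good, since by downward coherence its part below any `γ < β` lies
in a single entry `D j γ`. -/

theorem exists_isUnboundedIn_of_biUnion_eq_Iio {β : Ordinal.{u}} {κ : Cardinal.{u}}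
    (hκ : κ < β.cof) (E : Ordinal.{u} → Set Ordinal.{u})
    (hE : ⋃ i ∈ Iio κ.ord, E i = Iio β) : ∃ i < κ.ord, IsUnboundedIn (E i) β := by
  by_contra! hbdd
  simp only [IsUnboundedIn, not_forall, not_exists, not_and, not_le] at hbdd
  choose g hgβ hg using fun i : Iio κ.ord => hbdd i.1 i.2
  have hsup : ⨆ i, g i < β := by
    refine Ordinal.lift_iSup_lt_of_lt_cof ?_ hgβ
    rwa [Cardinal.lift_id'.{u, u + 1}, Cardinal.mk_Iio_ordinal, ← Ordinal.lift_cof,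
      Cardinal.lift_lt, Cardinal.card_ord]
  have hmem : ⨆ i, g i ∈ ⋃ i ∈ Iio κ.ord, E i := hE ▸ hsup
  simp only [mem_iUnion] at hmem
  obtain ⟨i, hi, hsupi⟩ := hmem
  exact (hg ⟨i, hi⟩ _ hsupi).not_ge (Ordinal.le_iSup g ⟨i, hi⟩)

theorem mem_goodPoints_of_downwardCoherent {θ lam : Cardinal}
    {D : Ordinal → Ordinal → Set Ordinal} (hD : IsCoveringMatrix θ lam D)
    (hdc : DownwardCoherent θ lam D) {β : Ordinal}
    (hβ : β < lam.ord) (hcof : θ < β.cof) : β ∈ goodPoints θ lam D := by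
  have hcover := hD.1 β hβ
  obtain ⟨i, hi, hunb⟩ := exists_isUnboundedIn_of_biUnion_eq_Iio hcof _ hcover
  refine ⟨hβ, hcof, D i β, hcover ▸ subset_biUnion_of_mem (u := fun j => D j β) hi, hunb, ?_⟩
  intro γ hγ
  obtain ⟨j, hj, hsub⟩ := hdc γ β hγ hβ i hi
  exact ⟨γ, hγ, j, hj, hsub⟩

theorem stmt10_general (θ lam : Cardinal) (D : Ordinal → Ordinal → Set Ordinal)
    (hD : IsCoveringMatrix θ lam D) (hdc : DownwardCoherent θ lam D) :
    goodPoints θ lam D = {β | β < lam.ord ∧ θ < Ordinal.cof β} :=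
  Set.ext fun _ => ⟨fun hgood => ⟨hgood.1, hgood.2.1⟩,
    fun hβ => mem_goodPoints_of_downwardCoherent hD hdc hβ.1 hβ.2⟩

/-- If `θ⁺ < lam` are regular and `D` is a downward coherent `θ`-covering
matrix for `lam`, then `A_D = S^lam_{>θ}`. -/
theorem stmt10 (θ lam : Cardinal) (hθ : θ.IsRegular) (hlam : lam.IsRegular)
    (hsucc : Order.succ θ < lam) (D : Ordinal → Ordinal → Set Ordinal)
    (hD : IsCoveringMatrix θ lam D) (hdc : DownwardCoherent θ lam D) :
    goodPoints θ lam D = {β | β < lam.ord ∧ θ < Ordinal.cof β} :=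
  stmt10_general θ lam D hD hdc

end
end

section
/- Suppose θ < λ are infinite regular cardinals and f = ⟨f_β : β < λ⟩ is a club-increasing sequence of functions from θ to the ordinals. Then cf(γ_f) = θ or cf(γ_f) = λ. -/
noncomputable section

universe u

open Cardinal Set

/-! The values `f β i` (`β < λ`, `i < θ`) form a cofinal subset of `γ_f` of size `λ·θ = λ`, so
`cf γ_f ≤ λ`. If `cf γ_f < λ`, take a cofinal subset of that size and a witnessing row `β` for each
of its elements; by regularity of `λ` these rows are bounded by some `B < λ`, and since every
`f_β <* f_B`, the single non-decreasing row `f_B : θ → γ_f` is cofinal. A non-decreasing cofinal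
map from `θ` has the cofinality of `θ`, which is `θ` itself. -/

namespace Order

theorem cof_congr_of_monotone {α β : Type u} [LinearOrder α] [Preorder β] {g : α → β}
    (hg : Monotone g) (hunb : ∀ y, ∃ x, y < g x) : cof α = cof β := by
  refine le_antisymm ?_ ?_
  · rw [le_cof_iff]
    intro s hs
    choose h hh using hunb
    refine (cof_le (s := h '' s) fun a ↦ ?_).trans mk_image_le
    obtain ⟨y, hy, hay⟩ := hs (g a)
    exact ⟨h y, mem_image_of_mem h hy, (hg.reflect_lt (hay.trans_lt (hh y))).le⟩
  · obtain ⟨t, ht, hcard⟩ := exists_cof_eq α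
    refine (cof_le (s := g '' t) fun y ↦ ?_).trans (mk_image_le.trans hcard.le)
    obtain ⟨x, hx⟩ := hunb y
    obtain ⟨x', hx', hxx'⟩ := ht x
    exact ⟨g x', mem_image_of_mem g hx', hx.le.trans (hg hxx')⟩

end Order

namespace Ordinal

theorem cof_eq_cof_of_monotoneOn {o Γ : Ordinal.{u}} {g : Ordinal.{u} → Ordinal.{u}}
    (hg : MonotoneOn g (Iio o)) (hlt : ∀ j < o, g j < Γ) (hunb : ∀ γ < Γ, ∃ j < o, γ < g j) :
    Γ.cof = o.cof := by
  let G : Iio o → Iio Γ := fun j ↦ ⟨g j, hlt j j.2⟩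
  have hG : Monotone G := fun i j hij ↦ hg i.2 j.2 hij
  have := Order.cof_congr_of_monotone hG fun y ↦ by
    obtain ⟨j, hj, hyj⟩ := hunb y y.2
    exact ⟨⟨j, hj⟩, hyj⟩
  rw [cof_Iio, cof_Iio, ← lift_cof, ← lift_cof, Cardinal.lift_inj] at this
  exact this.symm

end Ordinal

theorem exists_lt_of_ltStar {θ : Cardinal} {g h : Ordinal → Ordinal}
    (hg : MonotoneOn g (Iio θ.ord)) (hgh : ltStar θ g h) {i : Ordinal} (hi : i < θ.ord) :
    ∃ j < θ.ord, g i < h j := by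
  obtain ⟨i₀, hi₀, hlt⟩ := hgh
  have hj : max i i₀ < θ.ord := max_lt hi hi₀
  exact ⟨max i i₀, hj, (hg hi hj (le_max_left i i₀)).trans_lt (hlt _ (le_max_right i i₀) hj)⟩

section seqBound

variable {θ : Cardinal.{u}} {δ : Ordinal.{u}} {f : Ordinal.{u} → Ordinal.{u} → Ordinal.{u}}

theorem seqBound_eq_iSup :
    seqBound θ δ f = ⨆ p : Iio δ × Iio θ.ord, f p.1 p.2 + 1 := by
  have hmem : ⨆ p : Iio δ × Iio θ.ord, f p.1 p.2 + 1 ∈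
      {γ | ∀ β < δ, ∀ i < θ.ord, f β i < γ} := fun β hβ i hi ↦
    Ordinal.lt_iSup_add_one (fun p : Iio δ × Iio θ.ord ↦ f p.1 p.2) (⟨β, hβ⟩, ⟨i, hi⟩)
  exact le_antisymm (csInf_le' hmem) <| le_csInf ⟨_, hmem⟩ fun γ hγ ↦
    Ordinal.iSup_add_one_le fun p ↦ hγ _ p.1.2 _ p.2.2

theorem lt_seqBound {β i : Ordinal} (hβ : β < δ) (hi : i < θ.ord) : f β i < seqBound θ δ f := by
  rw [seqBound_eq_iSup]
  exact Ordinal.lt_iSup_add_one (fun p : Iio δ × Iio θ.ord ↦ f p.1 p.2) (⟨β, hβ⟩, ⟨i, hi⟩)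

theorem exists_le_of_lt_seqBound {γ : Ordinal} (hγ : γ < seqBound θ δ f) :
    ∃ β < δ, ∃ i < θ.ord, γ ≤ f β i := by
  rw [seqBound_eq_iSup, Ordinal.lt_iSup_add_one_iff] at hγ
  obtain ⟨⟨⟨β, hβ⟩, ⟨i, hi⟩⟩, hle⟩ := hγ
  exact ⟨β, hβ, i, hi, hle⟩

variable (θ δ f) in
theorem cof_seqBound_le : (seqBound θ δ f).cof ≤ δ.card * θ := by
  have := Ordinal.cof_lift_iSup_add_one_le.{u, u + 1} fun p : Iio δ × Iio θ.ord ↦ f p.1 p.2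
  rw [← seqBound_eq_iSup] at this
  rw [← Cardinal.lift_le.{u + 1}]
  simpa [mk_Iio_ordinal] using this

theorem exists_cofinal_row_of_cof_seqBound_lt (hmono : ∀ β < δ, MonotoneOn (f β) (Iio θ.ord))
    (hlt : ∀ α β, α < β → β < δ → ltStar θ (f α) (f β)) (hcof : (seqBound θ δ f).cof < δ.cof) :
    ∃ B < δ, ∀ γ < seqBound θ δ f, ∃ j < θ.ord, γ < f B j := by
  obtain ⟨s, hs, hcard⟩ := Order.exists_cof_eq (Iio (seqBound θ δ f))
  choose b hb i hi hle using fun x : s ↦ exists_le_of_lt_seqBound x.1.2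
  have hB : ⨆ x, b x + 1 < δ := by
    refine Ordinal.lift_iSup_add_one_lt_of_lt_cof ?_ hb
    simpa [hcard, ← Ordinal.lift_cof] using hcof
  refine ⟨_, hB, fun γ hγ ↦ ?_⟩
  obtain ⟨x, hx, hγx⟩ := hs ⟨γ, hγ⟩
  obtain ⟨j, hj, hrow⟩ := exists_lt_of_ltStar (hmono _ (hb ⟨x, hx⟩))
    (hlt _ _ (Ordinal.lt_iSup_add_one b ⟨x, hx⟩) hB) (hi ⟨x, hx⟩)
  exact ⟨j, hj, (Subtype.coe_le_coe.2 hγx |>.trans (hle ⟨x, hx⟩)).trans_lt hrow⟩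

end seqBound

/-- If `θ < lam` are infinite regular cardinals and `f` is a club-increasing
sequence of length `lam` of functions from `θ` to the ordinals, then `cf(γ_f)` is `θ` or
`lam`. -/
theorem stmt16 (θ lam : Cardinal) (hθ : θ.IsRegular) (hlam : lam.IsRegular) (hθlam : θ < lam)
    (f : Ordinal → Ordinal → Ordinal) (hf : ClubIncreasing θ lam.ord f) :
    Ordinal.cof (seqBound θ lam.ord f) = θ ∨ Ordinal.cof (seqBound θ lam.ord f) = lam := by
  have hmono : ∀ β < lam.ord, MonotoneOn (f β) (Iio θ.ord) :=
    fun β hβ i _ j hj hij ↦ hf.1 β hβ i j hij hj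
  have hcof_le : (seqBound θ lam.ord f).cof ≤ lam := by
    simpa [mul_eq_max hlam.aleph0_le hθ.aleph0_le, hθlam.le] using cof_seqBound_le θ lam.ord f
  rcases hcof_le.eq_or_lt with heq | hcof_lt
  · exact Or.inr heq
  left
  obtain ⟨B, hB, hrow⟩ :=
    exists_cofinal_row_of_cof_seqBound_lt hmono hf.2.1 (by rwa [hlam.cof_ord])
  rw [Ordinal.cof_eq_cof_of_monotoneOn (hmono B hB) (fun j hj ↦ lt_seqBound hB hj) hrow,
    hθ.cof_ord]

end
end
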